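/- Fix μ₀ ∈ P(K). The function F : P(K) → [0,∞), F(μ) := d₂(μ, μ₀)² = ∑_{k=1}^∞ 2^{-k} q_k^{-1} ⟨μ − μ₀, f_k⟩², is twice differentiable in the linear functional sense, with δF/δm(μ,x) = ∑_{k=1}^∞ 2^{-k} q_k^{-1} · 2⟨μ−μ₀, f_k⟩ f_k(x) and δ²F/δm²(μ,x,y) = ∑_{k=1}^∞ 2^{-k} q_k^{-1} · 2 f_k(x) f_k(y); both series converge uniformly and the derivatives are bounded by constants independent of μ₀ (namely ‖δF/δm‖_∞ ≤ 4 and ‖δ²F/δm²‖_∞ ≤ 2). -/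

import Mathlib

open MeasureTheory Real Filter Topology Set intervalIntegral

noncomputable def pairing {d : ℕ} {K : Set (EuclideanSpace ℝ (Fin d))}
    (μ : ProbabilityMeasure K) (f : EuclideanSpace ℝ (Fin d) → ℝ) : ℝ :=
  ∫ x, f (x : EuclideanSpace ℝ (Fin d)) ∂(μ : Measure K)

noncomputable def d2 {d : ℕ} {K : Set (EuclideanSpace ℝ (Fin d))}
    (F : ℕ → EuclideanSpace ℝ (Fin d) → ℝ) (q : ℕ → ℝ)
    (μ ν : ProbabilityMeasure K) : ℝ :=
  Real.sqrt (∑' k : ℕ, (2 : ℝ)⁻¹ ^ (k + 1) * (q k)⁻¹ * (pairing μ (F k) - pairing ν (F k)) ^ 2)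

/-!
Write `w k = 2⁻¹ ^ (k + 1) / q k`, so that `w ≥ 0` and `∑ w k ≤ 1`. Every series in the statement
has the form `∑ w k * e k` with `e` bounded, hence converges absolutely with
`|∑ w k * e k| ≤ sup |e k|`; this gives the bounds `4` and `2`, and lets the series be integrated
term by term against probability measures. The first-order identity is then the scalar identity
`(a - z)² - (b - z)² = ∫₀¹ 2 (θ a + (1 - θ) b - z) (a - b) dθ` summed over `k` (the summed integrand
is affine in `θ`), and the second-order identity holds because `δF/δm (μ, x)` is affine in `μ`.
-/

section WeightedSeries

variable {w : ℕ → ℝ}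

theorem summable_mul_of_abs_le (hw0 : ∀ k, 0 ≤ w k) (hw : Summable w) {e : ℕ → ℝ} {A : ℝ}
    (he : ∀ k, |e k| ≤ A) : Summable fun k => w k * e k :=
  (hw.mul_left A).of_norm_bounded fun k => by
    rw [norm_mul, norm_of_nonneg (hw0 k), mul_comm]
    exact mul_le_mul_of_nonneg_right (he k) (hw0 k)

theorem abs_tsum_mul_le (hw0 : ∀ k, 0 ≤ w k) (hw : Summable w) (hw1 : ∑' k, w k ≤ 1)
    {e : ℕ → ℝ} {A : ℝ} (he : ∀ k, |e k| ≤ A) : |∑' k, w k * e k| ≤ A := by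
  have hA : 0 ≤ A := (abs_nonneg _).trans (he 0)
  have hbound : ‖∑' k, w k * e k‖ ≤ A * ∑' k, w k :=
    tsum_of_norm_bounded (hw.hasSum.mul_left A) fun k => by
      rw [norm_mul, norm_of_nonneg (hw0 k), mul_comm]
      exact mul_le_mul_of_nonneg_right (he k) (hw0 k)
  rw [Real.norm_eq_abs] at hbound
  exact hbound.trans (mul_le_of_le_one_right hA hw1)

theorem tsum_mul_sub_tsum_mul (hw0 : ∀ k, 0 ≤ w k) (hw : Summable w) {e f : ℕ → ℝ}
    {A B : ℝ} (he : ∀ k, |e k| ≤ A) (hf : ∀ k, |f k| ≤ B) :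
    ∑' k, w k * e k - ∑' k, w k * f k = ∑' k, w k * (e k - f k) := by
  rw [← (summable_mul_of_abs_le hw0 hw he).tsum_sub (summable_mul_of_abs_le hw0 hw hf)]
  simp only [mul_sub]

theorem integral_tsum_mul_affine (hw0 : ∀ k, 0 ≤ w k) (hw : Summable w) {u v : ℕ → ℝ}
    {A B : ℝ} (hu : ∀ k, |u k| ≤ A) (hv : ∀ k, |v k| ≤ B) :
    ∫ θ in (0 : ℝ)..1, ∑' k, w k * (θ * u k + v k) =
      (∑' k, w k * u k) / 2 + ∑' k, w k * v k := by
  have hsu := summable_mul_of_abs_le hw0 hw hu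
  have hsv := summable_mul_of_abs_le hw0 hw hv
  have affine : ∀ θ : ℝ, ∑' k, w k * (θ * u k + v k) = θ * ∑' k, w k * u k + ∑' k, w k * v k := by
    intro θ
    rw [← tsum_mul_left, ← (hsu.mul_left θ).tsum_add hsv]
    exact tsum_congr fun k => by ring
  simp only [affine]
  rw [integral_add (f := fun θ => θ * _) (g := fun _ => _)
    ((continuous_id.mul continuous_const).intervalIntegrable _ _)
    intervalIntegrable_const, intervalIntegral.integral_mul_const, integral_id, intervalIntegral.integral_const]
  norm_num
  ring

theorem tsum_sq_sub_tsum_sq_eq_integral (hw0 : ∀ k, 0 ≤ w k) (hw : Summable w)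
    {a b z : ℕ → ℝ} {C : ℝ} (ha : ∀ k, |a k| ≤ C) (hb : ∀ k, |b k| ≤ C) (hz : ∀ k, |z k| ≤ C) :
    ∑' k, w k * (a k - z k) ^ 2 - ∑' k, w k * (b k - z k) ^ 2 =
      ∫ θ in (0 : ℝ)..1, ∑' k, w k * (2 * (θ * a k + (1 - θ) * b k - z k) * (a k - b k)) := by
  have hab : ∀ k, |a k - b k| ≤ 2 * C := fun k => (abs_sub _ _).trans (by linarith [ha k, hb k])
  have hbz : ∀ k, |b k - z k| ≤ 2 * C := fun k => (abs_sub _ _).trans (by linarith [hb k, hz k])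
  have haz : ∀ k, |a k - z k| ≤ 2 * C := fun k => (abs_sub _ _).trans (by linarith [ha k, hz k])
  have hsq {t : ℕ → ℝ} (ht : ∀ k, |t k| ≤ 2 * C) : ∀ k, |t k ^ 2| ≤ (2 * C) ^ 2 := fun k => by
    rw [abs_pow]; exact pow_le_pow_left₀ (abs_nonneg _) (ht k) 2
  have hu : ∀ k, |2 * (a k - b k) ^ 2| ≤ 2 * (2 * C) ^ 2 := fun k => by
    rw [abs_mul, abs_two]; linarith [hsq hab k]
  have hv : ∀ k, |2 * (b k - z k) * (a k - b k)| ≤ 2 * (2 * C) * (2 * C) := fun k => by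
    rw [abs_mul, abs_mul, abs_two, mul_assoc, mul_assoc]
    exact mul_le_mul_of_nonneg_left
      (mul_le_mul (hbz k) (hab k) (abs_nonneg _) ((abs_nonneg _).trans (hbz 0))) zero_le_two
  calc ∑' k, w k * (a k - z k) ^ 2 - ∑' k, w k * (b k - z k) ^ 2
      = (∑' k, w k * (2 * (a k - b k) ^ 2)) / 2 + ∑' k, w k * (2 * (b k - z k) * (a k - b k)) := by
        rw [tsum_mul_sub_tsum_mul hw0 hw (hsq haz) (hsq hbz), ← tsum_div_const,
          ← (summable_mul_of_abs_le hw0 hw hu).div_const 2 |>.tsum_add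
            (summable_mul_of_abs_le hw0 hw hv)]
        exact tsum_congr fun k => by ring
    _ = ∫ θ in (0 : ℝ)..1, ∑' k, w k * (θ * (2 * (a k - b k) ^ 2) + 2 * (b k - z k) * (a k - b k)) :=
        (integral_tsum_mul_affine hw0 hw hu hv).symm
    _ = _ := integral_congr fun θ _ => tsum_congr fun k => by ring

end WeightedSeries

theorem abs_mul_le_of_abs_le_one {a b C : ℝ} (ha : |a| ≤ C) (hb : |b| ≤ 1) : |a * b| ≤ C := by
  rw [abs_mul]
  exact (mul_le_of_le_one_right (abs_nonneg a) hb).trans ha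

theorem integral_tsum_mul_of_abs_le_one {α : Type*} [MeasurableSpace α] {ρ : Measure α}
    [IsProbabilityMeasure ρ] {c : ℕ → ℝ} {g : ℕ → α → ℝ} (hc : Summable fun k => |c k|)
    (hg : ∀ k, AEStronglyMeasurable (g k) ρ) (hgb : ∀ k x, |g k x| ≤ 1) :
    ∫ x, ∑' k, c k * g k x ∂ρ = ∑' k, c k * ∫ x, g k x ∂ρ := by
  have hint : ∀ k, Integrable (fun x => c k * g k x) ρ := fun k =>
    ((integrable_const 1).mono' (hg k) (ae_of_all _ fun x => hgb k x)).const_mul (c k)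
  have hnorm : ∀ k, ∫ x, ‖c k * g k x‖ ∂ρ ≤ |c k| := fun k =>
    (integral_mono (hint k).norm (integrable_const |c k|) fun x =>
      abs_mul_le_of_abs_le_one le_rfl (hgb k x)).trans_eq (by simp)
  rw [← integral_tsum_of_summable_integral_norm hint
    (hc.of_nonneg_of_le (fun k => integral_nonneg fun x => norm_nonneg _) hnorm)]
  exact tsum_congr fun k => integral_const_mul (c k) _

theorem hasSum_inv_two_pow_succ : HasSum (fun k : ℕ => (2 : ℝ)⁻¹ ^ (k + 1)) 1 := by
  convert hasSum_geometric_two' 1 using 1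
  funext k
  rw [pow_succ, inv_pow]
  ring

section Weight

variable {q : ℕ → ℝ}

theorem weight_nonneg (hq : ∀ k, 0 ≤ q k) (k : ℕ) : 0 ≤ (2 : ℝ)⁻¹ ^ (k + 1) * (q k)⁻¹ := by
  have := hq k
  positivity

theorem weight_le_inv_two_pow_succ (hq : ∀ k, 1 ≤ q k) (k : ℕ) :
    (2 : ℝ)⁻¹ ^ (k + 1) * (q k)⁻¹ ≤ (2 : ℝ)⁻¹ ^ (k + 1) :=
  mul_le_of_le_one_right (by positivity) (inv_le_one_of_one_le₀ (hq k))

theorem summable_weight (hq : ∀ k, 1 ≤ q k) :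
    Summable fun k : ℕ => (2 : ℝ)⁻¹ ^ (k + 1) * (q k)⁻¹ :=
  hasSum_inv_two_pow_succ.summable.of_nonneg_of_le
    (weight_nonneg fun k => zero_le_one.trans (hq k)) (weight_le_inv_two_pow_succ hq)

theorem tsum_weight_le_one (hq : ∀ k, 1 ≤ q k) :
    ∑' k : ℕ, (2 : ℝ)⁻¹ ^ (k + 1) * (q k)⁻¹ ≤ 1 :=
  hasSum_le (weight_le_inv_two_pow_succ hq) (summable_weight hq).hasSum hasSum_inv_two_pow_succ

end Weight

section Pairing

variable {d : ℕ} {K : Set (EuclideanSpace ℝ (Fin d))}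

theorem abs_pairing_le_one (μ : ProbabilityMeasure K) {f : EuclideanSpace ℝ (Fin d) → ℝ}
    (hf : ∀ x ∈ K, |f x| ≤ 1) : |pairing μ f| ≤ 1 := by
  simpa [pairing] using norm_integral_le_of_norm_le_const (μ := (μ : Measure K))
    (f := fun x : K => f x) (ae_of_all _ fun x => hf x x.2)

theorem d2_sq {F : ℕ → EuclideanSpace ℝ (Fin d) → ℝ} {q : ℕ → ℝ} (hq : ∀ k, 0 ≤ q k)
    (μ ν : ProbabilityMeasure K) :
    d2 F q μ ν ^ 2 =
      ∑' k : ℕ, (2 : ℝ)⁻¹ ^ (k + 1) * (q k)⁻¹ * (pairing μ (F k) - pairing ν (F k)) ^ 2 :=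
  sq_sqrt <| tsum_nonneg fun k => by have := hq k; positivity

theorem integral_tsum_sub_integral_tsum_eq_tsum_pairing_sub
    {F : ℕ → EuclideanSpace ℝ (Fin d) → ℝ} (hcont : ∀ k, Continuous (F k))
    (hbd : ∀ k, ∀ x ∈ K, |F k x| ≤ 1) {w : ℕ → ℝ} (hw0 : ∀ k, 0 ≤ w k) (hw : Summable w)
    {e : ℕ → ℝ} {C : ℝ} (he : ∀ k, |e k| ≤ C) (μ ν : ProbabilityMeasure K) :
    ∫ x, ∑' k, w k * (e k * F k (x : EuclideanSpace ℝ (Fin d))) ∂(μ : Measure K) -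
        ∫ x, ∑' k, w k * (e k * F k (x : EuclideanSpace ℝ (Fin d))) ∂(ν : Measure K) =
      ∑' k, w k * (e k * (pairing μ (F k) - pairing ν (F k))) := by
  have hc : Summable fun k => |w k * e k| := by
    simpa only [abs_mul, abs_of_nonneg (hw0 _)] using
      summable_mul_of_abs_le hw0 hw fun k => (abs_abs (e k)).trans_le (he k)
  have swap : ∀ ρ : ProbabilityMeasure K,
      ∫ x, ∑' k, w k * (e k * F k (x : EuclideanSpace ℝ (Fin d))) ∂(ρ : Measure K) =
        ∑' k, w k * (e k * pairing ρ (F k)) := fun ρ => by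
    simp only [← mul_assoc]
    exact integral_tsum_mul_of_abs_le_one hc
      (fun k => ((hcont k).comp continuous_subtype_val).aestronglyMeasurable)
      fun k x => hbd k x x.2
  rw [swap, swap, tsum_mul_sub_tsum_mul hw0 hw
    (fun k => abs_mul_le_of_abs_le_one (he k) (abs_pairing_le_one μ (hbd k)))
    (fun k => abs_mul_le_of_abs_le_one (he k) (abs_pairing_le_one ν (hbd k)))]
  simp only [mul_sub]

theorem d2_sq_sub_d2_sq_eq_integral {F : ℕ → EuclideanSpace ℝ (Fin d) → ℝ}
    (hcont : ∀ k, Continuous (F k)) (hbd : ∀ k, ∀ x ∈ K, |F k x| ≤ 1) {q : ℕ → ℝ}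
    (hq : ∀ k, 1 ≤ q k) (μ₀ μ ν : ProbabilityMeasure K) :
    d2 F q μ μ₀ ^ 2 - d2 F q ν μ₀ ^ 2 =
      ∫ θ in (0 : ℝ)..1,
        ((∫ x, ∑' k : ℕ, (2 : ℝ)⁻¹ ^ (k + 1) * (q k)⁻¹ *
            (2 * (θ * pairing μ (F k) + (1 - θ) * pairing ν (F k) - pairing μ₀ (F k)) *
              F k (x : EuclideanSpace ℝ (Fin d))) ∂(μ : Measure K)) -
          ∫ x, ∑' k : ℕ, (2 : ℝ)⁻¹ ^ (k + 1) * (q k)⁻¹ *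
            (2 * (θ * pairing μ (F k) + (1 - θ) * pairing ν (F k) - pairing μ₀ (F k)) *
              F k (x : EuclideanSpace ℝ (Fin d))) ∂(ν : Measure K)) := by
  have hq0 : ∀ k, 0 ≤ q k := fun k => zero_le_one.trans (hq k)
  have hP : ∀ (ρ : ProbabilityMeasure K) k, |pairing ρ (F k)| ≤ 1 := fun ρ k =>
    abs_pairing_le_one ρ (hbd k)
  rw [d2_sq hq0, d2_sq hq0, tsum_sq_sub_tsum_sq_eq_integral (weight_nonneg hq0)
    (summable_weight hq) (hP μ) (hP ν) (hP μ₀)]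
  refine integral_congr fun θ hθ => ?_
  rw [uIcc_of_le zero_le_one] at hθ
  have hm : ∀ k,
      |2 * (θ * pairing μ (F k) + (1 - θ) * pairing ν (F k) - pairing μ₀ (F k))| ≤ 4 := by
    intro k
    have := abs_le.1 (hP μ k); have := abs_le.1 (hP ν k); have := abs_le.1 (hP μ₀ k)
    rw [abs_le]
    constructor <;> nlinarith [hθ.1, hθ.2]
  exact (integral_tsum_sub_integral_tsum_eq_tsum_pairing_sub hcont hbd (weight_nonneg hq0)
    (summable_weight hq) hm μ ν).symm

end Pairing

theorem d2_sq_twice_lfd_differentiable_general {d : ℕ} {K : Set (EuclideanSpace ℝ (Fin d))}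
    (F : ℕ → EuclideanSpace ℝ (Fin d) → ℝ) (q : ℕ → ℝ)
    (hcont : ∀ k, Continuous (F k))
    (hbd : ∀ k, ∀ x ∈ K, |F k x| ≤ 1)
    (hq : ∀ k, 1 ≤ q k)
    (μ₀ : ProbabilityMeasure K) :
    -- the series defining the two derivatives converge
    (∀ (c : ℕ → ℝ), (∀ k, |c k| ≤ 2) → ∀ x ∈ K,
      Summable (fun k : ℕ => (2 : ℝ)⁻¹ ^ (k + 1) * (q k)⁻¹ * (2 * c k * F k x))) ∧
    (∀ x ∈ K, ∀ y ∈ K,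
      Summable (fun k : ℕ => (2 : ℝ)⁻¹ ^ (k + 1) * (q k)⁻¹ * (2 * F k x * F k y))) ∧
    -- first-order linear functional derivative identity
    (∀ μ ν : ProbabilityMeasure K,
      d2 F q μ μ₀ ^ 2 - d2 F q ν μ₀ ^ 2 =
        ∫ θ in (0:ℝ)..1,
          ((∫ x, (∑' k : ℕ, (2 : ℝ)⁻¹ ^ (k + 1) * (q k)⁻¹ *
              (2 * (θ * pairing μ (F k) + (1 - θ) * pairing ν (F k) - pairing μ₀ (F k)) *
                F k (x : EuclideanSpace ℝ (Fin d)))) ∂(μ : Measure K)) -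
           (∫ x, (∑' k : ℕ, (2 : ℝ)⁻¹ ^ (k + 1) * (q k)⁻¹ *
              (2 * (θ * pairing μ (F k) + (1 - θ) * pairing ν (F k) - pairing μ₀ (F k)) *
                F k (x : EuclideanSpace ℝ (Fin d)))) ∂(ν : Measure K)))) ∧
    -- second-order linear functional derivative identity (in `μ`, for fixed `x`)
    (∀ x ∈ K, ∀ μ ν : ProbabilityMeasure K,
      (∑' k : ℕ, (2 : ℝ)⁻¹ ^ (k + 1) * (q k)⁻¹ *
          (2 * (pairing μ (F k) - pairing μ₀ (F k)) * F k x)) -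
      (∑' k : ℕ, (2 : ℝ)⁻¹ ^ (k + 1) * (q k)⁻¹ *
          (2 * (pairing ν (F k) - pairing μ₀ (F k)) * F k x)) =
        ∫ θ in (0:ℝ)..1,
          ((∫ y, (∑' k : ℕ, (2 : ℝ)⁻¹ ^ (k + 1) * (q k)⁻¹ *
              (2 * F k x * F k (y : EuclideanSpace ℝ (Fin d)))) ∂(μ : Measure K)) -
           (∫ y, (∑' k : ℕ, (2 : ℝ)⁻¹ ^ (k + 1) * (q k)⁻¹ *
              (2 * F k x * F k (y : EuclideanSpace ℝ (Fin d)))) ∂(ν : Measure K)))) ∧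
    -- uniform bounds, independent of `μ₀`
    (∀ μ : ProbabilityMeasure K, ∀ x ∈ K,
      |∑' k : ℕ, (2 : ℝ)⁻¹ ^ (k + 1) * (q k)⁻¹ *
          (2 * (pairing μ (F k) - pairing μ₀ (F k)) * F k x)| ≤ 4) ∧
    (∀ x ∈ K, ∀ y ∈ K,
      |∑' k : ℕ, (2 : ℝ)⁻¹ ^ (k + 1) * (q k)⁻¹ * (2 * F k x * F k y)| ≤ 2) := by
  have hw0 : ∀ k, 0 ≤ (2 : ℝ)⁻¹ ^ (k + 1) * (q k)⁻¹ :=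
    weight_nonneg fun k => zero_le_one.trans (hq k)
  have hw := summable_weight hq
  have hw1 := tsum_weight_le_one hq
  have hP : ∀ (ρ : ProbabilityMeasure K) k, |pairing ρ (F k)| ≤ 1 := fun ρ k =>
    abs_pairing_le_one ρ (hbd k)
  have hFx : ∀ x ∈ K, ∀ k, |2 * F k x| ≤ 2 := fun x hx k => by
    rw [abs_mul, abs_two]; linarith [hbd k x hx]
  have hfirst : ∀ (ρ : ProbabilityMeasure K), ∀ x ∈ K, ∀ k,
      |2 * (pairing ρ (F k) - pairing μ₀ (F k)) * F k x| ≤ 4 := fun ρ x hx k => by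
    refine abs_mul_le_of_abs_le_one ?_ (hbd k x hx)
    rw [abs_mul, abs_two]
    linarith [abs_sub (pairing ρ (F k)) (pairing μ₀ (F k)), hP ρ k, hP μ₀ k]
  have hsecond : ∀ x ∈ K, ∀ y ∈ K, ∀ k, |2 * F k x * F k y| ≤ 2 := fun x hx y hy k =>
    abs_mul_le_of_abs_le_one (hFx x hx k) (hbd k y hy)
  refine ⟨fun c hc x hx => summable_mul_of_abs_le (A := 4) hw0 hw fun k => ?_,
    fun x hx y hy => summable_mul_of_abs_le hw0 hw (hsecond x hx y hy),
    d2_sq_sub_d2_sq_eq_integral hcont hbd hq μ₀, fun x hx μ ν => ?_,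
    fun μ x hx => abs_tsum_mul_le hw0 hw hw1 (hfirst μ x hx),
    fun x hx y hy => abs_tsum_mul_le hw0 hw hw1 (hsecond x hx y hy)⟩
  · refine abs_mul_le_of_abs_le_one ?_ (hbd k x hx)
    rw [abs_mul, abs_two]
    linarith [hc k]
  · rw [intervalIntegral.integral_const, sub_zero, one_smul,
      integral_tsum_sub_integral_tsum_eq_tsum_pairing_sub hcont hbd hw0 hw (hFx x hx) μ ν,
      tsum_mul_sub_tsum_mul hw0 hw (hfirst μ x hx) (hfirst ν x hx)]
    exact tsum_congr fun k => by ring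

/-- Fix `μ₀ ∈ P(K)`. The function `F(μ) := d₂(μ,μ₀)²` is twice
differentiable in the linear functional sense, with
`δF/δm(μ,x) = ∑_k 2^{-k} q_k⁻¹ · 2⟨μ-μ₀,f_k⟩ f_k(x)` and
`δ²F/δm²(μ,x,y) = ∑_k 2^{-k} q_k⁻¹ · 2 f_k(x) f_k(y)`; both series converge and the
derivatives are bounded by `4` and `2` respectively, independently of `μ₀`. -/
theorem d2_sq_twice_lfd_differentiable {d : ℕ} {K : Set (EuclideanSpace ℝ (Fin d))}
    (hK : IsCompact K)
    (F : ℕ → EuclideanSpace ℝ (Fin d) → ℝ) (q : ℕ → ℝ)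
    (hcont : ∀ k, Continuous (F k))
    (hbd : ∀ k, ∀ x ∈ K, |F k x| ≤ 1)
    (hq : ∀ k, 1 ≤ q k)
    (μ₀ : ProbabilityMeasure K) :
    -- the series defining the two derivatives converge
    (∀ (c : ℕ → ℝ), (∀ k, |c k| ≤ 2) → ∀ x ∈ K,
      Summable (fun k : ℕ => (2 : ℝ)⁻¹ ^ (k + 1) * (q k)⁻¹ * (2 * c k * F k x))) ∧
    (∀ x ∈ K, ∀ y ∈ K,
      Summable (fun k : ℕ => (2 : ℝ)⁻¹ ^ (k + 1) * (q k)⁻¹ * (2 * F k x * F k y))) ∧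
    -- first-order linear functional derivative identity
    (∀ μ ν : ProbabilityMeasure K,
      d2 F q μ μ₀ ^ 2 - d2 F q ν μ₀ ^ 2 =
        ∫ θ in (0:ℝ)..1,
          ((∫ x, (∑' k : ℕ, (2 : ℝ)⁻¹ ^ (k + 1) * (q k)⁻¹ *
              (2 * (θ * pairing μ (F k) + (1 - θ) * pairing ν (F k) - pairing μ₀ (F k)) *
                F k (x : EuclideanSpace ℝ (Fin d)))) ∂(μ : Measure K)) -
           (∫ x, (∑' k : ℕ, (2 : ℝ)⁻¹ ^ (k + 1) * (q k)⁻¹ *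
              (2 * (θ * pairing μ (F k) + (1 - θ) * pairing ν (F k) - pairing μ₀ (F k)) *
                F k (x : EuclideanSpace ℝ (Fin d)))) ∂(ν : Measure K)))) ∧
    -- second-order linear functional derivative identity (in `μ`, for fixed `x`)
    (∀ x ∈ K, ∀ μ ν : ProbabilityMeasure K,
      (∑' k : ℕ, (2 : ℝ)⁻¹ ^ (k + 1) * (q k)⁻¹ *
          (2 * (pairing μ (F k) - pairing μ₀ (F k)) * F k x)) -
      (∑' k : ℕ, (2 : ℝ)⁻¹ ^ (k + 1) * (q k)⁻¹ *
          (2 * (pairing ν (F k) - pairing μ₀ (F k)) * F k x)) =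
        ∫ θ in (0:ℝ)..1,
          ((∫ y, (∑' k : ℕ, (2 : ℝ)⁻¹ ^ (k + 1) * (q k)⁻¹ *
              (2 * F k x * F k (y : EuclideanSpace ℝ (Fin d)))) ∂(μ : Measure K)) -
           (∫ y, (∑' k : ℕ, (2 : ℝ)⁻¹ ^ (k + 1) * (q k)⁻¹ *
              (2 * F k x * F k (y : EuclideanSpace ℝ (Fin d)))) ∂(ν : Measure K)))) ∧
    -- uniform bounds, independent of `μ₀`
    (∀ μ : ProbabilityMeasure K, ∀ x ∈ K,
      |∑' k : ℕ, (2 : ℝ)⁻¹ ^ (k + 1) * (q k)⁻¹ *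
          (2 * (pairing μ (F k) - pairing μ₀ (F k)) * F k x)| ≤ 4) ∧
    (∀ x ∈ K, ∀ y ∈ K,
      |∑' k : ℕ, (2 : ℝ)⁻¹ ^ (k + 1) * (q k)⁻¹ * (2 * F k x * F k y)| ≤ 2) :=
  d2_sq_twice_lfd_differentiable_general F q hcont hbd hq μ₀
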